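/- arXiv:1606.08279 — 3 statements merged into one kernel-verified Lean document; each statement's English description precedes it below -/
import Mathlib

section
/- Assume every object of D is a finite direct sum of indecomposable objects. Let X be an indecomposable object admitting a nontrivial idempotent e : X → X (that is, e ∘ e = e, e ≠ 0 and e ≠ id_X). Then there is a path of length two from X[1] to X: there exists an indecomposable object C together with a nonzero morphism X[1] → C and a nonzero morphism C → X. -/
open CategoryTheory CategoryTheory.Limits CategoryTheory.Pretriangulated

universe v u

variable (C : Type u) [Category.{v} C] [Preadditive C] [HasZeroObject C]
  [HasShift C ℤ] [∀ n : ℤ, (shiftFunctor C n).Additive] [Pretriangulated C]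
  [HasFiniteBiproducts C]

/-- An object is indecomposable if it is nonzero and any biproduct decomposition is trivial. -/
def Indec (X : C) : Prop :=
  ¬ IsZero X ∧ ∀ (A B : C), (X ≅ A ⊞ B) → IsZero A ∨ IsZero B

/-- There is a path from `X` to `Y`: a sequence of indecomposables where each consecutive
pair admits a nonzero morphism, or the next one is the shift of the previous one. -/
def HasPath (X Y : C) : Prop :=
  ∃ (n : ℕ) (f : Fin (n + 1) → C), f 0 = X ∧ f (Fin.last n) = Y ∧
    (∀ i, Indec C (f i)) ∧
    ∀ i : Fin n, (∃ g : f i.castSucc ⟶ f i.succ, g ≠ 0) ∨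
      Nonempty (f i.succ ≅ (f i.castSucc)⟦(1 : ℤ)⟧)

/-- Two indecomposables are connected by a sequence of paths and inverse paths. -/
def PathConn (X Y : C) : Prop :=
  ∃ (n : ℕ) (f : Fin (n + 1) → C), f 0 = X ∧ f (Fin.last n) = Y ∧
    (∀ i, Indec C (f i)) ∧
    ∀ i : Fin n, (∃ g : f i.castSucc ⟶ f i.succ, g ≠ 0) ∨
      (∃ g : f i.succ ⟶ f i.castSucc, g ≠ 0) ∨
      ∃ s : ℤ, Nonempty (f i.succ ≅ (f i.castSucc)⟦s⟧)

/-- Every object is a finite direct sum of indecomposable objects. -/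
def EveryObjectDecomposes : Prop :=
  ∀ X : C, ∃ (n : ℕ) (f : Fin n → C), (∀ i, Indec C (f i)) ∧ Nonempty (X ≅ ⨁ f)

/-- `D` is a block: nonzero, Krull-Schmidt-type decomposition, and path-connected. -/
def IsBlock : Prop :=
  (∃ X : C, ¬ IsZero X) ∧ EveryObjectDecomposes C ∧
    ∀ X Y : C, Indec C X → Indec C Y → PathConn C X Y

/-- `add S`: objects isomorphic to finite direct sums of objects of `S`. -/
def addClosure (S : Set C) : Set C :=
  {X | ∃ (n : ℕ) (f : Fin n → C), (∀ i, f i ∈ S) ∧ Nonempty (X ≅ ⨁ f)}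

/-- A `t`-structure `(D^{≤0}, D^{≥0})` on `C`. -/
structure TStruct where
  le : Set C
  ge : Set C
  le_iso : ∀ ⦃X Y : C⦄, (X ≅ Y) → X ∈ le → Y ∈ le
  ge_iso : ∀ ⦃X Y : C⦄, (X ≅ Y) → X ∈ ge → Y ∈ ge
  hom_zero : ∀ ⦃X Y : C⦄, X ∈ le → Y ∈ ge → ∀ f : X ⟶ Y⟦(-1 : ℤ)⟧, f = 0
  le_shift : ∀ ⦃X : C⦄, X ∈ le → X⟦(1 : ℤ)⟧ ∈ le
  ge_shift : ∀ ⦃X : C⦄, X ∈ ge → X⟦(-1 : ℤ)⟧ ∈ ge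
  exists_triangle : ∀ X : C, ∃ (A B : C) (f : A ⟶ X) (g : X ⟶ B⟦(-1 : ℤ)⟧)
      (h : B⟦(-1 : ℤ)⟧ ⟶ A⟦(1 : ℤ)⟧),
      (Triangle.mk f g h ∈ distTriang C) ∧ A ∈ le ∧ B ∈ ge

variable {C}

/-- The heart of a t-structure. -/
def TStruct.heart (t : TStruct C) : Set C := t.le ∩ t.ge

/-- A t-structure is bounded if every object lies in `D^{≤n} ∩ D^{≥m}` for some `m ≤ n`,
where `X ∈ D^{≤n} := D^{≤0}[-n]` iff `X⟦n⟧ ∈ D^{≤0}`, and similarly for `D^{≥m}`. -/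
def TStruct.Bounded (t : TStruct C) : Prop :=
  ∀ X : C, ∃ m n : ℤ, m ≤ n ∧ X⟦n⟧ ∈ t.le ∧ X⟦m⟧ ∈ t.ge

/-- A bounded t-structure is hereditary if `Hom(X, Y⟦n⟧) = 0` for all `X`, `Y` in the heart
and `n ≥ 2`. -/
def TStruct.Hereditary (t : TStruct C) : Prop :=
  t.Bounded ∧ ∀ ⦃X Y : C⦄, X ∈ t.heart → Y ∈ t.heart →
    ∀ n : ℤ, 2 ≤ n → ∀ f : X ⟶ Y⟦n⟧, f = 0

variable (C)

open Preadditive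

section Aux

variable {C}

private lemma split_of_no_path (hdec : EveryObjectDecomposes C) (X : C)
    (hnot : ¬ ∃ W : C, Indec C W ∧ (∃ f : X⟦(1 : ℤ)⟧ ⟶ W, f ≠ 0) ∧ (∃ g : W ⟶ X, g ≠ 0))
    (e : X ⟶ X) (he : e ≫ e = e) :
    ∃ (B : C) (u : X ⟶ B) (v : B ⟶ X),
      u ≫ v = 𝟙 X - e ∧ v ≫ u = 𝟙 B ∧ e ≫ u = 0 := by
  classical
  obtain ⟨Z, g, h, hT⟩ := Pretriangulated.distinguished_cocone_triangle e
  have heg : e ≫ g = 0 := comp_distTriang_mor_zero₁₂ _ hT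
  have hgh : g ≫ h = 0 := comp_distTriang_mor_zero₂₃ _ hT
  have hhe : h ≫ (shiftFunctor C (1 : ℤ)).map e = 0 := comp_distTriang_mor_zero₃₁ _ hT
  -- factor `𝟙 X - e` through the cone, on both sides
  obtain ⟨p, hp⟩ : ∃ p : Z ⟶ X, 𝟙 X - e = g ≫ p := by
    obtain ⟨p, hp⟩ := Triangle.yoneda_exact₂ _ hT (𝟙 X - e)
      (show e ≫ (𝟙 X - e) = 0 by rw [comp_sub, Category.comp_id, he, sub_self])
    exact ⟨p, hp⟩
  obtain ⟨q, hq⟩ : ∃ q : X⟦(1 : ℤ)⟧ ⟶ Z,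
      (shiftFunctor C (1 : ℤ)).map (𝟙 X - e) = q ≫ h := by
    obtain ⟨q, hq⟩ := Triangle.coyoneda_exact₁ _ hT ((shiftFunctor C (1 : ℤ)).map (𝟙 X - e))
      (show (shiftFunctor C (1 : ℤ)).map (𝟙 X - e) ≫ (shiftFunctor C (1 : ℤ)).map e = 0 by
        rw [← Functor.map_comp, sub_comp, Category.id_comp, he, sub_self, Functor.map_zero])
    exact ⟨q, hq⟩
  -- decompose the cone into indecomposables
  obtain ⟨n, W, hW, ⟨θ⟩⟩ := hdec Z
  set S : Fin n → Prop := fun i => ∀ f : X⟦(1 : ℤ)⟧ ⟶ W i, f = 0 with hSdef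
  have hS' : ∀ i, ¬ S i → ∀ g' : W i ⟶ X, g' = 0 := by
    intro i hi g'
    by_contra hg
    obtain ⟨f, hf⟩ : ∃ f : X⟦(1 : ℤ)⟧ ⟶ W i, f ≠ 0 := not_forall.mp hi
    exact hnot ⟨W i, hW i, ⟨f, hf⟩, ⟨g', hg⟩⟩
  set B : C := ⨁ (Subtype.restrict S W) with hBdef
  set πB : Z ⟶ B := θ.hom ≫ biproduct.toSubtype W S with hπBdef
  set jB : B ⟶ Z := biproduct.fromSubtype W S ≫ θ.inv with hjBdef
  have hjπ : jB ≫ πB = 𝟙 B := by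
    rw [hjBdef, hπBdef, Category.assoc, Iso.inv_hom_id_assoc,
      biproduct.fromSubtype_toSubtype]
  have hqπ : q ≫ πB = 0 := by
    apply biproduct.hom_ext
    intro j
    rw [hπBdef, zero_comp, Category.assoc, Category.assoc, biproduct.toSubtype_π]
    exact j.2 _
  have hρp : πB ≫ jB ≫ p = p := by
    rw [hπBdef, hjBdef]
    simp only [Category.assoc]
    rw [← cancel_epi θ.inv, Iso.inv_hom_id_assoc]
    apply biproduct.hom_ext'
    intro i
    rw [biproduct.ι_toSubtype_assoc]
    by_cases hi : S i
    · simp [hi]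
      exact biproduct.ι_fromSubtype_assoc W S ⟨i, hi⟩ (θ.inv ≫ p)
    · simpa [hi] using (hS' i hi (biproduct.ι W i ≫ θ.inv ≫ p)).symm
  have hρp' : ∀ {V : C} (k : X ⟶ V), πB ≫ jB ≫ p ≫ k = p ≫ k := by
    intro V k
    rw [← Category.assoc jB p k, ← Category.assoc πB, hρp]
  -- the key nilpotency computation
  set ψ : Z ⟶ Z := 𝟙 Z - h ≫ q - p ≫ g with hψdef
  have hqh : h ≫ q ≫ h = h := by
    rw [← hq, Functor.map_sub, CategoryTheory.Functor.map_id, comp_sub, Category.comp_id, hhe, sub_zero]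
  have hψh : ψ ≫ h = 0 := by
    rw [hψdef, sub_comp, sub_comp, Category.id_comp, Category.assoc, hqh,
      Category.assoc, hgh, comp_zero, sub_zero, sub_self]
  have hgψ : g ≫ ψ = 0 := by
    rw [hψdef, comp_sub, comp_sub, Category.comp_id, ← Category.assoc, hgh, zero_comp,
      sub_zero, ← Category.assoc, ← hp, sub_comp, Category.id_comp, heg, sub_zero, sub_self]
  have hψψ : ψ ≫ ψ = 0 := by
    obtain ⟨t, ht⟩ : ∃ t : Z ⟶ X, ψ = t ≫ g := by
      obtain ⟨t, ht⟩ := Triangle.coyoneda_exact₃ _ hT ψ hψh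
      exact ⟨t, ht⟩
    have h1 : (g ≫ t) ≫ g = 0 := by
      rw [Category.assoc, ← ht, hgψ]
    obtain ⟨w, hw⟩ : ∃ w : X ⟶ X, g ≫ t = w ≫ e := by
      obtain ⟨w, hw⟩ := Triangle.coyoneda_exact₂ _ hT (g ≫ t) h1
      exact ⟨w, hw⟩
    rw [ht, Category.assoc, ← Category.assoc g t, hw, Category.assoc, heg,
      comp_zero, comp_zero]
  set d : B ⟶ B := jB ≫ p ≫ g ≫ πB with hddef
  have hψB : jB ≫ ψ ≫ πB = 𝟙 B - d := by
    rw [hψdef]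
    simp only [sub_comp, comp_sub, Category.id_comp, Category.assoc]
    rw [hjπ, hqπ, comp_zero, comp_zero, sub_zero, hddef]
  have hkey : πB ≫ jB ≫ ψ ≫ πB = ψ ≫ πB := by
    rw [hψdef]
    simp only [sub_comp, comp_sub, Category.id_comp, Category.assoc]
    rw [hqπ, comp_zero, comp_zero, comp_zero, sub_zero, sub_zero, hρp']
    congr 1
    rw [Category.assoc, hjπ, Category.comp_id]
  have hnil : (𝟙 B - d) ≫ (𝟙 B - d) = 0 := by
    rw [← hψB]
    calc (jB ≫ ψ ≫ πB) ≫ jB ≫ ψ ≫ πB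
        = jB ≫ ψ ≫ (πB ≫ jB ≫ ψ ≫ πB) := by simp only [Category.assoc]
      _ = jB ≫ ψ ≫ ψ ≫ πB := by rw [hkey]
      _ = jB ≫ (ψ ≫ ψ) ≫ πB := by simp only [Category.assoc]
      _ = 0 := by rw [hψψ, zero_comp, comp_zero]
  set c : B ⟶ B := 𝟙 B + (𝟙 B - d) with hcdef
  obtain ⟨w, hw, hww⟩ : ∃ w : B ⟶ B, w = 𝟙 B - d ∧ w ≫ w = 0 := ⟨_, rfl, hnil⟩
  have hdw : d = 𝟙 B - w := by rw [hw]; abel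
  have hcw : c = 𝟙 B + w := by rw [hcdef, hw]
  have hdc : d ≫ c = 𝟙 B := by
    rw [hdw, hcw]
    simp only [sub_comp, comp_add, Category.id_comp, Category.comp_id]
    rw [hww]
    abel
  have hcd : c ≫ d = 𝟙 B := by
    rw [hdw, hcw]
    simp only [add_comp, comp_sub, Category.id_comp, Category.comp_id]
    rw [hww]
    abel
  refine ⟨B, g ≫ πB, c ≫ jB ≫ p, ?_, ?_, ?_⟩
  · -- u ≫ v = 𝟙 X - e
    have step1 : g ≫ πB ≫ jB ≫ p = 𝟙 X - e := by rw [hρp, ← hp]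
    have step2 : (𝟙 X - e) ≫ (g ≫ πB) ≫ c ≫ jB ≫ p = 𝟙 X - e := by
      calc (𝟙 X - e) ≫ (g ≫ πB) ≫ c ≫ jB ≫ p
          = (g ≫ πB ≫ jB ≫ p) ≫ (g ≫ πB) ≫ c ≫ jB ≫ p := by rw [step1]
        _ = g ≫ πB ≫ (jB ≫ p ≫ g ≫ πB) ≫ c ≫ jB ≫ p := by simp only [Category.assoc]
        _ = g ≫ πB ≫ (d ≫ c) ≫ jB ≫ p := by
            rw [← hddef]; simp only [Category.assoc]
        _ = g ≫ πB ≫ jB ≫ p := by rw [hdc, Category.id_comp]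
        _ = 𝟙 X - e := step1
    have step3 : e ≫ (g ≫ πB) ≫ c ≫ jB ≫ p = 0 := by
      calc e ≫ (g ≫ πB) ≫ c ≫ jB ≫ p
          = ((e ≫ g) ≫ πB) ≫ c ≫ jB ≫ p := by simp only [Category.assoc]
        _ = 0 := by rw [heg]; simp only [zero_comp]
    calc (g ≫ πB) ≫ c ≫ jB ≫ p
        = (e + (𝟙 X - e)) ≫ (g ≫ πB) ≫ c ≫ jB ≫ p := by
          rw [add_sub_cancel, Category.id_comp]
      _ = e ≫ (g ≫ πB) ≫ c ≫ jB ≫ p + (𝟙 X - e) ≫ (g ≫ πB) ≫ c ≫ jB ≫ p := by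
          rw [add_comp]
      _ = 𝟙 X - e := by rw [step2, step3, zero_add]
  · -- v ≫ u = 𝟙 B
    calc (c ≫ jB ≫ p) ≫ g ≫ πB = c ≫ (jB ≫ p ≫ g ≫ πB) := by simp only [Category.assoc]
      _ = c ≫ d := by rw [← hddef]
      _ = 𝟙 B := hcd
  · -- e ≫ u = 0
    rw [← Category.assoc, heg, zero_comp]

end Aux

/-- if an indecomposable `X` has a nontrivial idempotent, then there is a path
of length two from `X⟦1⟧` to `X`: an indecomposable `W` with nonzero morphisms
`X⟦1⟧ ⟶ W` and `W ⟶ X`. -/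
theorem stmt_15 (hdec : EveryObjectDecomposes C) (X : C) (hX : Indec C X)
    (e : X ⟶ X) (he : e ≫ e = e) (he₀ : e ≠ 0) (he₁ : e ≠ 𝟙 X) :
    ∃ W : C, Indec C W ∧ (∃ f : X⟦(1 : ℤ)⟧ ⟶ W, f ≠ 0) ∧ (∃ g : W ⟶ X, g ≠ 0) := by
  by_contra hnot
  obtain ⟨B, u, v, huv, hvu, heu⟩ := split_of_no_path hdec X hnot e he
  have he' : (𝟙 X - e) ≫ (𝟙 X - e) = 𝟙 X - e := by
    simp only [sub_comp, comp_sub, Category.id_comp, Category.comp_id, he]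
    abel
  obtain ⟨B', u', v', huv', hvu', heu'⟩ := split_of_no_path hdec X hnot (𝟙 X - e) he'
  have huv'e : u' ≫ v' = e := by rw [huv']; abel
  have hv'e : v' ≫ e = v' := by
    calc v' ≫ e = v' ≫ u' ≫ v' := by rw [huv'e]
      _ = (v' ≫ u') ≫ v' := by rw [Category.assoc]
      _ = v' := by rw [hvu', Category.id_comp]
  have hve : v ≫ (𝟙 X - e) = v := by
    calc v ≫ (𝟙 X - e) = v ≫ u ≫ v := by rw [huv]
      _ = (v ≫ u) ≫ v := by rw [Category.assoc]
      _ = v := by rw [hvu, Category.id_comp]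
  have cross1 : v' ≫ u = 0 := by
    rw [← hv'e, Category.assoc, heu, comp_zero]
  have cross2 : v ≫ u' = 0 := by
    rw [← hve, Category.assoc, heu', comp_zero]
  have hiso : X ≅ B' ⊞ B := by
    refine ⟨biprod.lift u' u, biprod.desc v' v, ?_, ?_⟩
    · rw [biprod.lift_desc, huv'e, huv]
      abel
    · apply biprod.hom_ext'
      · apply biprod.hom_ext <;>
          simp [hvu', hvu, cross1, cross2]
      · apply biprod.hom_ext <;>
          simp [hvu', hvu, cross1, cross2]
  rcases hX.2 B' B hiso with hz | hz
  · exact he₀ (by rw [← huv'e, hz.eq_of_tgt u' 0, zero_comp])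
  · apply he₁
    have : u = 0 := hz.eq_of_tgt u 0
    have h0 : 𝟙 X - e = 0 := by rw [← huv, this, zero_comp]
    exact (sub_eq_zero.mp h0).symm
end

section
/- Assume D is a block: D is nonzero, every object is a finite direct sum of indecomposables, and the indecomposable objects are path-connected. If D admits a bounded hereditary t-structure, then for every indecomposable object X of D there is no path from X[1] to X. -/
open CategoryTheory CategoryTheory.Limits CategoryTheory.Pretriangulated

universe v u

variable (C : Type u) [Category.{v} C] [Preadditive C] [HasZeroObject C]
  [HasShift C ℤ] [∀ n : ℤ, (shiftFunctor C n).Additive] [Pretriangulated C]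
  [HasFiniteBiproducts C]

variable {C}

variable (C)

set_option linter.unusedSectionVars false

section Aux

variable {C}

/-- Composition of shift isos. -/
noncomputable def sh2 (X : C) (a b c : ℤ) (h : a + b = c) : (X⟦a⟧)⟦b⟧ ≅ X⟦c⟧ :=
  ((shiftFunctorAdd' C a b c h).app X).symm

noncomputable def sh0 (X : C) : X⟦(0 : ℤ)⟧ ≅ X := (shiftFunctorZero C ℤ).app X

lemma zero_tgt {Y U V : C} (e : U ≅ V) (h : ∀ g : Y ⟶ V, g = 0) (f : Y ⟶ U) : f = 0 := by
  have : f ≫ e.hom = 0 := h _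
  calc f = (f ≫ e.hom) ≫ e.inv := by simp
  _ = 0 := by rw [this]; simp

lemma zero_src {Y U V : C} (e : U ≅ V) (h : ∀ g : V ⟶ Y, g = 0) (f : U ⟶ Y) : f = 0 := by
  have : e.inv ≫ f = 0 := h _
  calc f = e.hom ≫ e.inv ≫ f := by simp
  _ = 0 := by rw [this]; simp

lemma shift_map_zero {X Y : C} (f : X ⟶ Y) (n : ℤ) (h : f⟦n⟧' = 0) : f = 0 :=
  (Functor.map_eq_zero_iff (shiftFunctor C n)).1 h

lemma isZero_of_shift {X : C} (n : ℤ) (h : IsZero (X⟦n⟧)) : IsZero X := by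
  rw [IsZero.iff_id_eq_zero] at h ⊢
  exact shift_map_zero _ n (by rw [(shiftFunctor C n).map_id]; exact h)

namespace TStruct

variable (t : TStruct C)

lemma le_shift_nonneg {X : C} (hX : X ∈ t.le) : ∀ (k : ℕ), X⟦(k : ℤ)⟧ ∈ t.le
  | 0 => t.le_iso (sh0 X).symm hX
  | (k+1) => t.le_iso (sh2 X k 1 ((k+1 : ℕ) : ℤ) (by push_cast; ring)) (t.le_shift (le_shift_nonneg hX k))

lemma le_shift' {X : C} (hX : X ∈ t.le) {k : ℤ} (hk : 0 ≤ k) : X⟦k⟧ ∈ t.le := by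
  obtain ⟨j, rfl⟩ := Int.eq_ofNat_of_zero_le hk
  exact t.le_shift_nonneg hX j

lemma ge_shift_nonpos {X : C} (hX : X ∈ t.ge) : ∀ (k : ℕ), X⟦-(k : ℤ)⟧ ∈ t.ge
  | 0 => t.ge_iso (sh0 X).symm (by simpa using hX)
  | (k+1) => t.ge_iso (sh2 X (-(k:ℤ)) (-1) (-((k+1 : ℕ) : ℤ)) (by push_cast; ring))
      (t.ge_shift (ge_shift_nonpos hX k))

lemma ge_shift' {X : C} (hX : X ∈ t.ge) {k : ℤ} (hk : k ≤ 0) : X⟦k⟧ ∈ t.ge := by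
  obtain ⟨j, rfl⟩ := Int.exists_eq_neg_ofNat hk
  exact t.ge_shift_nonpos hX j

/-- `Hom(le, ge⟦b⟧) = 0` for `b ≤ -1`. -/
lemma hom_zero_neg {X Y : C} (hX : X ∈ t.le) (hY : Y ∈ t.ge) {b : ℤ} (hb : b ≤ -1)
    (f : X ⟶ Y⟦b⟧) : f = 0 := by
  refine zero_tgt ((sh2 Y (b+1) (-1) b (by ring)).symm) (fun g => ?_) f
  exact t.hom_zero hX (t.ge_shift' hY (by omega)) g

end TStruct

end Aux
namespace TStruct

variable {C}
variable (t : TStruct C)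

/-- Left orthogonality characterization: if every map to a `ge`-shifted-object vanishes,
then `X ∈ t.le`. -/
lemma mem_le_of_orth {X : C} (h : ∀ B ∈ t.ge, ∀ f : X ⟶ B⟦(-1 : ℤ)⟧, f = 0) : X ∈ t.le := by
  obtain ⟨A, B, f, g, h3, hT, hA, hB⟩ := t.exists_triangle X
  have hg : g = 0 := h B hB g
  -- get a retraction of h3 from the rotated triangle
  obtain ⟨r, hr⟩ := Pretriangulated.Triangle.yoneda_exact₂ _ (rot_of_distTriang _ hT)
    (𝟙 (B⟦(-1 : ℤ)⟧)) (by change g ≫ _ = 0; rw [hg, zero_comp])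
  have hr0 : r = 0 := t.hom_zero (t.le_shift hA) hB r
  have hzero : IsZero (B⟦(-1 : ℤ)⟧) := by
    rw [IsZero.iff_id_eq_zero, hr, hr0, comp_zero]; rfl
  have : IsIso f := (Pretriangulated.Triangle.isZero₃_iff_isIso₁ _ hT).1 hzero
  exact t.le_iso (asIso f) hA

/-- Right orthogonality characterization: if every map from a `le`-object vanishes,
then `X⟦1⟧ ∈ t.ge`. -/
lemma shift_mem_ge_of_orth {X : C} (h : ∀ Y ∈ t.le, ∀ f : Y ⟶ X, f = 0) :
    X⟦(1 : ℤ)⟧ ∈ t.ge := by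
  obtain ⟨A, B, f, g, h3, hT, hA, hB⟩ := t.exists_triangle X
  have hf : f = 0 := h A hA f
  obtain ⟨s, hs⟩ := Pretriangulated.Triangle.coyoneda_exact₂ _
    (rot_of_distTriang _ (rot_of_distTriang _ hT)) (𝟙 (A⟦(1 : ℤ)⟧))
    (by change 𝟙 _ ≫ (-(f⟦(1 : ℤ)⟧')) = 0; rw [hf]; simp)
  have hs0 : s = 0 := t.hom_zero (t.le_shift hA) hB s
  have hzero : IsZero (A⟦(1 : ℤ)⟧) := by
    rw [IsZero.iff_id_eq_zero, hs, hs0, zero_comp]; rfl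
  have : IsIso g := (Pretriangulated.Triangle.isZero₁_iff_isIso₂ _ hT).1 (isZero_of_shift _ hzero)
  exact t.ge_iso ((sh2 B (-1) 1 0 (by ring) ≪≫ sh0 B).symm ≪≫
    ((shiftFunctor C (1 : ℤ)).mapIso (asIso g)).symm) hB

end TStruct
namespace TStruct

variable {C}
variable (t : TStruct C)

lemma hom_to_shift_zero {X' Y : C} {m j : ℤ} (hX : X' ∈ t.le) (hY : Y⟦m⟧ ∈ t.ge)
    (hj : j ≤ m - 1) (f : X' ⟶ Y⟦j⟧) : f = 0 :=
  zero_tgt ((sh2 Y m (j - m) j (by ring)).symm)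
    (fun g => t.hom_zero_neg hX hY (by omega) g) f

lemma heart_hom_zero (hh : t.Hereditary) {X Y : C} {a b : ℤ}
    (hX : X⟦a⟧ ∈ t.heart) (hY : Y⟦b⟧ ∈ t.heart) (hab : a ≤ b - 1 ∨ b + 2 ≤ a)
    (f : X ⟶ Y) : f = 0 := by
  apply shift_map_zero f a
  refine zero_tgt ((sh2 Y b (a - b) a (by ring)).symm) (fun g => ?_) _
  rcases hab with h1 | h2
  · exact t.hom_zero_neg hX.1 hY.2 (by omega) g
  · exact hh.2 hX hY (a - b) (by omega) g

lemma cut {m n c : ℤ} {X : C} (hle : X⟦n⟧ ∈ t.le) (hge : X⟦m⟧ ∈ t.ge)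
    (hmc : m ≤ c) (hcn : c < n) :
    ∃ (A W : C) (f : A ⟶ X) (g : X ⟶ W) (h : W ⟶ A⟦(1 : ℤ)⟧),
      (Triangle.mk f g h ∈ distTriang C) ∧
      A⟦c⟧ ∈ t.le ∧ A⟦m⟧ ∈ t.ge ∧ W⟦n⟧ ∈ t.le ∧ W⟦c+1⟧ ∈ t.ge := by
  obtain ⟨A₀, B, f₀, g₀, h₀, hT, hA, hB⟩ := t.exists_triangle (X⟦c⟧)
  set T := Triangle.mk f₀ g₀ h₀ with hTdef
  -- Step 1 : A₀⟦m - c⟧ ∈ t.ge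
  have step1 : A₀⟦m - c⟧ ∈ t.ge := by
    have horth : ∀ Y ∈ t.le, ∀ u : Y ⟶ A₀⟦m - c - 1⟧, u = 0 := by
      intro Y hY u
      have hTd : (Pretriangulated.Triangle.shiftFunctor C (m - c - 1)).obj T ∈ distTriang C :=
        Pretriangulated.Triangle.shift_distinguished T hT (m - c - 1)
      have hT' := inv_rot_of_distTriang _ hTd
      set T' := ((Pretriangulated.Triangle.shiftFunctor C (m - c - 1)).obj T).invRotate with hT'def
      have hu2 : u ≫ T'.mor₂ = 0 := by
        apply zero_tgt (sh2 X c (m - c - 1) (m - 1) (by ring))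
        intro w
        exact t.hom_to_shift_zero hY hge (by omega) w
      obtain ⟨v, hv⟩ := Pretriangulated.Triangle.coyoneda_exact₂ _ hT' u hu2
      have hv0 : v = 0 := by
        apply zero_tgt ((shiftFunctor C (-1 : ℤ)).mapIso (sh2 B (-1) (m - c - 1) (m - c - 2)
          (by ring)))
        intro w
        exact t.hom_zero hY (t.ge_shift' hB (by omega)) w
      rw [hv, hv0, zero_comp]; rfl
    exact t.ge_iso (sh2 A₀ (m - c - 1) 1 (m - c) (by ring)) (t.shift_mem_ge_of_orth horth)
  -- Step 2 : (B⟦-1⟧)⟦n - c⟧ ∈ t.le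
  have step2 : (B⟦(-1 : ℤ)⟧)⟦n - c⟧ ∈ t.le := by
    apply t.mem_le_of_orth
    intro B' hB' u
    have hTk : (Pretriangulated.Triangle.shiftFunctor C (n - c)).obj T ∈ distTriang C :=
      Pretriangulated.Triangle.shift_distinguished T hT (n - c)
    have hT'' := rot_of_distTriang _ hTk
    set T'' := ((Pretriangulated.Triangle.shiftFunctor C (n - c)).obj T).rotate with hT''def
    have hu : T''.mor₁ ≫ u = 0 := by
      apply zero_src (sh2 X c (n - c) n (by ring))
      intro w
      exact t.hom_zero hle hB' w
    obtain ⟨w, hw⟩ := Pretriangulated.Triangle.yoneda_exact₂ _ hT'' u hu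
    have hw0 : w = 0 := by
      apply zero_src (sh2 A₀ (n - c) 1 (n - c + 1) (by ring))
      intro w'
      exact t.hom_zero (t.le_shift' hA (by omega)) hB' w'
    rw [hw, hw0, comp_zero]; rfl
  -- Step 3 : unshift
  have hTc : (Pretriangulated.Triangle.shiftFunctor C (-c)).obj T ∈ distTriang C :=
    Pretriangulated.Triangle.shift_distinguished T hT (-c)
  set Tc := (Pretriangulated.Triangle.shiftFunctor C (-c)).obj T with hTcdef
  let e₂ : (X⟦c⟧)⟦-c⟧ ≅ X := sh2 X c (-c) 0 (by ring) ≪≫ sh0 X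
  refine ⟨A₀⟦-c⟧, (B⟦(-1 : ℤ)⟧)⟦-c⟧, Tc.mor₁ ≫ e₂.hom, e₂.inv ≫ Tc.mor₂, Tc.mor₃,
    ?_, ?_, ?_, ?_, ?_⟩
  · refine Pretriangulated.isomorphic_distinguished _ hTc _ ?_
    exact Pretriangulated.Triangle.isoMk _ _ (Iso.refl _) e₂.symm (Iso.refl _)
      (by change (Tc.mor₁ ≫ e₂.hom) ≫ e₂.inv = 𝟙 _ ≫ Tc.mor₁
          exact (Category.assoc _ _ _).trans ((Tc.mor₁ ≫= e₂.hom_inv_id).trans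
            ((Category.comp_id _).trans (Category.id_comp _).symm)))
      (by change (e₂.inv ≫ Tc.mor₂) ≫ 𝟙 _ = e₂.inv ≫ Tc.mor₂
          rw [Category.comp_id])
      (by change Tc.mor₃ ≫ (𝟙 _)⟦(1 : ℤ)⟧' = 𝟙 _ ≫ Tc.mor₃
          rw [CategoryTheory.Functor.map_id, Category.comp_id, Category.id_comp])
  · exact t.le_iso (sh2 A₀ (-c) c 0 (by ring) ≪≫ sh0 A₀).symm hA
  · exact t.ge_iso (sh2 A₀ (-c) m (m - c) (by ring)).symm step1
  · exact t.le_iso (sh2 (B⟦(-1 : ℤ)⟧) (-c) n (n - c) (by ring)).symm step2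
  · exact t.ge_iso (sh2 (B⟦(-1 : ℤ)⟧) (-c) (c+1) 1 (by ring) ≪≫ sh2 B (-1) 1 0 (by ring)
      ≪≫ sh0 B).symm hB

end TStruct
namespace TStruct

variable {C}
variable (t : TStruct C)

lemma heart_iso {U V : C} (e : U ≅ V) (h : U ∈ t.heart) : V ∈ t.heart :=
  ⟨t.le_iso e h.1, t.ge_iso e h.2⟩

/-- Vanishing of morphisms between objects with disjoint amplitude ranges. -/
lemma amp_hom_zero (hh : t.Hereditary) :
    ∀ (k : ℕ) {m₁ n₁ m₂ n₂ : ℤ} {X Y : C},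
      m₁ ≤ n₁ → m₂ ≤ n₂ → X⟦n₁⟧ ∈ t.le → X⟦m₁⟧ ∈ t.ge → Y⟦n₂⟧ ∈ t.le → Y⟦m₂⟧ ∈ t.ge →
      n₂ + 2 ≤ m₁ → (n₁ - m₁).toNat + (n₂ - m₂).toNat ≤ k → ∀ f : X ⟶ Y, f = 0 := by
  intro k
  induction k with
  | zero =>
    intro m₁ n₁ m₂ n₂ X Y h₁ h₂ hle₁ hge₁ hle₂ hge₂ hgap hk f
    have e₁ : m₁ = n₁ := by omega
    have e₂ : m₂ = n₂ := by omega
    exact t.heart_hom_zero hh (a := m₁) (b := m₂) ⟨e₁ ▸ hle₁, hge₁⟩ ⟨e₂ ▸ hle₂, hge₂⟩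
      (Or.inr (by omega)) f
  | succ k ih =>
    intro m₁ n₁ m₂ n₂ X Y h₁ h₂ hle₁ hge₁ hle₂ hge₂ hgap hk f
    by_cases hY : m₂ < n₂
    · obtain ⟨A, W, fa, gw, hw, hdist, hAle, hAge, hWle, hWge⟩ :=
        t.cut hle₂ hge₂ (le_refl m₂) hY
      have h2 : f ≫ gw = 0 :=
        ih (by omega) (by omega : m₂ + 1 ≤ n₂) hle₁ hge₁ hWle hWge (by omega) (by omega) _
      obtain ⟨v, hv⟩ := Pretriangulated.Triangle.coyoneda_exact₂ _ hdist f h2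
      have hv0 : v = 0 :=
        ih h₁ (le_refl m₂) hle₁ hge₁ hAle hAge (by omega) (by omega) v
      rw [hv, hv0, zero_comp]; rfl
    · have e₂ : m₂ = n₂ := by omega
      by_cases hX : m₁ < n₁
      · obtain ⟨A, W, fa, gw, hw, hdist, hAle, hAge, hWle, hWge⟩ :=
          t.cut hle₁ hge₁ (by omega : m₁ ≤ n₁ - 1) (by omega)
        have h1 : fa ≫ f = 0 :=
          ih (by omega : m₁ ≤ n₁ - 1) h₂ hAle hAge hle₂ hge₂ hgap (by omega) _
        obtain ⟨w, hwf⟩ := Pretriangulated.Triangle.yoneda_exact₂ _ hdist f h1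
        have hw0 : w = 0 := by
          have hWge' : W⟦n₁⟧ ∈ t.ge := by
            have : n₁ - 1 + 1 = n₁ := by ring
            rwa [this] at hWge
          exact ih (le_refl n₁) h₂ hWle hWge' hle₂ hge₂ (by omega) (by omega) w
        rw [hwf, hw0, comp_zero]; rfl
      · have e₁ : m₁ = n₁ := by omega
        exact t.heart_hom_zero hh (a := m₁) (b := m₂) ⟨e₁ ▸ hle₁, hge₁⟩ ⟨e₂ ▸ hle₂, hge₂⟩
          (Or.inr (by omega)) f

lemma indec_pure_aux (hh : t.Hereditary) :
    ∀ (k : ℕ) {m n : ℤ} {X : C}, Indec C X → m ≤ n → X⟦n⟧ ∈ t.le → X⟦m⟧ ∈ t.ge →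
      (n - m).toNat ≤ k → ∃ a : ℤ, X⟦a⟧ ∈ t.heart := by
  intro k
  induction k with
  | zero =>
    intro m n X _ h1 hle hge hk
    exact ⟨n, ⟨hle, (by omega : m = n) ▸ hge⟩⟩
  | succ k ih =>
    intro m n X hX h1 hle hge hk
    by_cases hmn : m < n
    · obtain ⟨A, W, fa, gw, hw, hdist, hAle, hAge, hWle, hWge⟩ :=
        t.cut hle hge (by omega : m ≤ n - 1) (by omega)
      have hWge' : W⟦n⟧ ∈ t.ge := by
        have : n - 1 + 1 = n := by ring
        rwa [this] at hWge
      have hw0 : hw = 0 := by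
        refine t.amp_hom_zero hh (((n - 2) - (m - 1)).toNat) (le_refl n)
          (by omega : m - 1 ≤ n - 2) hWle hWge'
          (t.le_iso (sh2 A 1 (n - 2) (n - 1) (by ring)).symm hAle)
          (t.ge_iso (sh2 A 1 (m - 1) m (by ring)).symm hAge) (by omega) (by omega) hw
      obtain ⟨e, -, -⟩ :=
        Pretriangulated.exists_iso_binaryBiproduct_of_distTriang _ hdist hw0
      rcases hX.2 A W e with hZA | hZW
      · have : IsIso gw := (Pretriangulated.Triangle.isZero₁_iff_isIso₂ _ hdist).1 hZA
        refine ⟨n, ⟨t.le_iso ((shiftFunctor C n).mapIso (asIso gw)).symm hWle,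
          t.ge_iso ((shiftFunctor C n).mapIso (asIso gw)).symm hWge'⟩⟩
      · have : IsIso fa := (Pretriangulated.Triangle.isZero₃_iff_isIso₁ _ hdist).1 hZW
        exact ih hX (by omega : m ≤ n - 1)
          (t.le_iso ((shiftFunctor C (n - 1)).mapIso (asIso fa)) hAle)
          hge (by omega)
    · exact ⟨n, ⟨hle, (by omega : m = n) ▸ hge⟩⟩

lemma indec_pure (hh : t.Hereditary) {X : C} (hX : Indec C X) :
    ∃ a : ℤ, X⟦a⟧ ∈ t.heart := by
  obtain ⟨m, n, hmn, hle, hge⟩ := hh.1 X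
  exact t.indec_pure_aux hh ((n - m).toNat) hX hmn hle hge (le_refl _)

lemma pure_unique (hh : t.Hereditary) {X : C} (hnz : ¬ IsZero X) {a b : ℤ}
    (ha : X⟦a⟧ ∈ t.heart) (hb : X⟦b⟧ ∈ t.heart) : a = b := by
  by_contra hne
  rcases lt_or_gt_of_ne hne with h | h
  · exact hnz (IsZero.of_iso (isZero_zero C) (Iso.refl _) |> fun _ => by
      have h0 : 𝟙 X = 0 := t.heart_hom_zero hh ha hb (Or.inl (by omega)) (𝟙 X)
      exact (IsZero.iff_id_eq_zero X).2 h0)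
  · exact hnz (by
      have h0 : 𝟙 X = 0 := t.heart_hom_zero hh hb ha (Or.inl (by omega)) (𝟙 X)
      exact (IsZero.iff_id_eq_zero X).2 h0)

end TStruct
/-- if a block admits a bounded hereditary t-structure, then for every
indecomposable `X` there is no path from `X⟦1⟧` to `X`. -/
theorem stmt_16 (hblock : IsBlock C) (t : TStruct C) (ht : t.Hereditary) :
    ∀ X : C, Indec C X → ¬ HasPath C (X⟦(1 : ℤ)⟧) X := by
  intro X hX hp
  obtain ⟨n, f, h0, hl, hind, hstep⟩ := hp
  have hpure : ∀ i, ∃ a : ℤ, (f i)⟦a⟧ ∈ t.heart := fun i => t.indec_pure ht (hind i)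
  choose D hD using hpure
  have hmono : ∀ i : Fin n, D i.succ ≤ D i.castSucc := by
    intro i
    rcases hstep i with ⟨g, hg⟩ | he
    · by_contra hlt
      push_neg at hlt
      exact hg (t.heart_hom_zero ht (hD i.castSucc) (hD i.succ) (Or.inl (by omega)) g)
    · obtain ⟨e⟩ := he
      have h1 : (f i.succ)⟦D i.castSucc - 1⟧ ∈ t.heart := by
        refine t.heart_iso ?_ (hD i.castSucc)
        exact (sh2 (f i.castSucc) 1 (D i.castSucc - 1) (D i.castSucc) (by ring)).symm ≪≫
          (shiftFunctor C (D i.castSucc - 1)).mapIso e.symm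
      have := t.pure_unique ht (hind i.succ).1 (hD i.succ) h1
      omega
  have hchain : ∀ (j : ℕ) (hj : j < n + 1), D ⟨j, hj⟩ ≤ D 0 := by
    intro j
    induction j with
    | zero =>
      intro hj
      have : (⟨0, hj⟩ : Fin (n + 1)) = 0 := by ext; simp
      rw [this]
    | succ j ihj =>
      intro hj
      have hjn : j < n := by omega
      have hstep' := hmono ⟨j, hjn⟩
      have e1 : (⟨j, hjn⟩ : Fin n).succ = ⟨j + 1, hj⟩ := rfl
      have e2 : (⟨j, hjn⟩ : Fin n).castSucc = ⟨j, by omega⟩ := rfl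
      rw [e1, e2] at hstep'
      exact le_trans hstep' (ihj (by omega))
  have hlast : D (Fin.last n) ≤ D 0 := hchain n (by omega)
  set a := D (Fin.last n) with ha
  have hXa : X⟦a⟧ ∈ t.heart := by rw [← hl]; exact hD _
  have hX1 : (X⟦(1 : ℤ)⟧)⟦a - 1⟧ ∈ t.heart :=
    t.heart_iso (sh2 X 1 (a - 1) a (by ring)).symm hXa
  have hD0 : D 0 = a - 1 := by
    have hnz : ¬ IsZero (f 0) := (hind 0).1
    have h' : (f 0)⟦a - 1⟧ ∈ t.heart := by rw [h0]; exact hX1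
    exact t.pure_unique ht hnz (hD 0) h'
  omega
end

section
/- Assume D is a block: D is nonzero, every object is a finite direct sum of indecomposables, and the indecomposable objects are path-connected. If there exist indecomposable objects X, Y of D such that there is no path from Y to X, then there exists an indecomposable object Z of D such that there is no path from Z[1] to Z. -/
open CategoryTheory CategoryTheory.Limits CategoryTheory.Pretriangulated

universe v u

variable (C : Type u) [Category.{v} C] [Preadditive C] [HasZeroObject C]
  [HasShift C ℤ] [∀ n : ℤ, (shiftFunctor C n).Additive] [Pretriangulated C]
  [HasFiniteBiproducts C]

variable {C}

variable (C)

section Auxiliary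

variable {C}

/-- A single step of a path. -/
def StepH (X Y : C) : Prop :=
  Indec C X ∧ Indec C Y ∧
    ((∃ g : X ⟶ Y, g ≠ 0) ∨ Nonempty (Y ≅ X⟦(1 : ℤ)⟧))

lemma id_ne_zero {X : C} (hX : Indec C X) : (𝟙 X) ≠ 0 :=
  fun h => hX.1 ((IsZero.iff_id_eq_zero X).2 h)

lemma iso_hom_ne_zero {X Y : C} (hX : Indec C X) (e : X ≅ Y) : e.hom ≠ 0 := by
  intro h
  exact id_ne_zero hX (by rw [← e.hom_inv_id, h, zero_comp])

lemma isZero_shift_iff (X : C) (s : ℤ) : IsZero (X⟦s⟧) ↔ IsZero X := by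
  constructor
  · intro hz
    exact IsZero.of_iso ((shiftFunctor C (-s)).map_isZero hz)
      ((shiftFunctorCompIsoId C s (-s) (add_neg_cancel s)).symm.app X)
  · intro hz
    exact (shiftFunctor C s).map_isZero hz

lemma indec_shift {X : C} (hX : Indec C X) (s : ℤ) : Indec C (X⟦s⟧) := by
  constructor
  · intro hz
    exact hX.1 ((isZero_shift_iff X s).1 hz)
  · intro A B e
    haveI : PreservesBinaryBiproducts (shiftFunctor C (-s)) :=
      preservesBinaryBiproducts_of_preservesBiproducts _
    have e2 : X ≅ (A⟦-s⟧ ⊞ B⟦-s⟧) :=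
      (shiftFunctorCompIsoId C s (-s) (add_neg_cancel s)).symm.app X ≪≫
        (shiftFunctor C (-s)).mapIso e ≪≫ (shiftFunctor C (-s)).mapBiprod A B
    rcases hX.2 _ _ e2 with hz | hz
    · exact Or.inl ((isZero_shift_iff A (-s)).1 hz)
    · exact Or.inr ((isZero_shift_iff B (-s)).1 hz)

lemma hasPath_iff {X Y : C} :
    HasPath C X Y ↔ Indec C X ∧ Relation.ReflTransGen (StepH (C := C)) X Y := by
  constructor
  · rintro ⟨n, f, h0, hl, hind, hstep⟩
    subst h0; subst hl
    refine ⟨hind 0, ?_⟩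
    have key : ∀ k (hk : k ≤ n),
        Relation.ReflTransGen (StepH (C := C)) (f 0) (f ⟨k, Nat.lt_succ_of_le hk⟩) := by
      intro k
      induction k with
      | zero =>
        intro hk
        have h00 : (⟨0, Nat.lt_succ_of_le hk⟩ : Fin (n + 1)) = 0 := by
          ext; simp
        rw [h00]
      | succ k ih =>
        intro hk
        have hk' : k ≤ n := Nat.le_of_succ_le hk
        refine (ih hk').tail ?_
        have hkn : k < n := hk
        exact ⟨hind (⟨k, hkn⟩ : Fin n).castSucc, hind (⟨k, hkn⟩ : Fin n).succ,
          hstep ⟨k, hkn⟩⟩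
    exact key n le_rfl
  · rintro ⟨hX, hr⟩
    induction hr with
    | refl => exact ⟨0, fun _ => X, rfl, rfl, fun _ => hX, fun i => i.elim0⟩
    | @tail b c hab hbc ih =>
      obtain ⟨n, f, h0, hl, hind, hstep⟩ := ih
      refine ⟨n + 1, Fin.snoc f c, ?_, ?_, ?_, ?_⟩
      · rw [show (0 : Fin (n + 2)) = Fin.castSucc 0 from (Fin.castSucc_zero).symm,
          Fin.snoc_castSucc]
        exact h0
      · rw [Fin.snoc_last]
      · intro i
        refine Fin.lastCases ?_ ?_ i
        · rw [Fin.snoc_last]; exact hbc.2.1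
        · intro j; rw [Fin.snoc_castSucc]; exact hind j
      · intro i
        refine Fin.lastCases ?_ ?_ i
        · rw [Fin.snoc_castSucc, Fin.succ_last, Fin.snoc_last, hl]
          exact hbc.2.2
        · intro j
          rw [Fin.snoc_castSucc, Fin.succ_castSucc, Fin.snoc_castSucc]
          exact hstep j

lemma hasPath_refl {X : C} (hX : Indec C X) : HasPath C X X :=
  (hasPath_iff).2 ⟨hX, Relation.ReflTransGen.refl⟩

lemma hasPath_trans {X Y Z : C} (h1 : HasPath C X Y) (h2 : HasPath C Y Z) :
    HasPath C X Z := by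
  rw [hasPath_iff] at h1 h2 ⊢
  exact ⟨h1.1, h1.2.trans h2.2⟩

lemma hasPath_single {X Y : C} (h : StepH X Y) : HasPath C X Y :=
  (hasPath_iff).2 ⟨h.1, Relation.ReflTransGen.single h⟩

lemma hasPath_of_iso {X Y : C} (hX : Indec C X) (hY : Indec C Y) (e : X ≅ Y) :
    HasPath C X Y :=
  hasPath_single ⟨hX, hY, Or.inl ⟨e.hom, iso_hom_ne_zero hX e⟩⟩

lemma hasPath_shift_up {X : C} (hX : Indec C X) (n : ℕ) :
    HasPath C X (X⟦(n : ℤ)⟧) := by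
  induction n with
  | zero =>
    exact hasPath_of_iso hX (indec_shift hX 0) ((shiftFunctorZero C ℤ).symm.app X)
  | succ n ih =>
    refine hasPath_trans ih (hasPath_single ⟨indec_shift hX (n : ℤ),
      indec_shift hX ((n + 1 : ℕ) : ℤ), Or.inr ⟨?_⟩⟩)
    exact (shiftFunctorAdd' C (n : ℤ) 1 ((n + 1 : ℕ) : ℤ) (by push_cast; ring)).app X

lemma hasPath_shift_down (H : ∀ Z : C, Indec C Z → HasPath C (Z⟦(1 : ℤ)⟧) Z)
    {X : C} (hX : Indec C X) (n : ℕ) : HasPath C (X⟦(n : ℤ)⟧) X := by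
  induction n with
  | zero =>
    exact hasPath_of_iso (indec_shift hX 0) hX ((shiftFunctorZero C ℤ).app X)
  | succ n ih =>
    refine hasPath_trans (hasPath_trans (hasPath_of_iso
      (indec_shift hX ((n + 1 : ℕ) : ℤ)) (indec_shift (indec_shift hX (n : ℤ)) 1)
      ((shiftFunctorAdd' C (n : ℤ) 1 ((n + 1 : ℕ) : ℤ) (by push_cast; ring)).app X))
      (H _ (indec_shift hX (n : ℤ)))) ih

lemma hasPath_shift (H : ∀ Z : C, Indec C Z → HasPath C (Z⟦(1 : ℤ)⟧) Z)
    {X : C} (hX : Indec C X) (s : ℤ) : HasPath C X (X⟦s⟧) := by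
  obtain ⟨n, rfl | rfl⟩ := Int.eq_nat_or_neg s
  · exact hasPath_shift_up hX n
  · refine hasPath_trans (hasPath_of_iso hX
      (indec_shift (indec_shift hX (-(n : ℤ))) (n : ℤ))
      ((shiftFunctorCompIsoId C (-(n : ℤ)) (n : ℤ) (by ring)).symm.app X)) ?_
    exact hasPath_shift_down H (indec_shift hX (-(n : ℤ))) n

/-- Reversing a nonzero morphism between indecomposables, assuming every indecomposable
`Z` admits a path from `Z⟦1⟧` to `Z`. -/
lemma reverse_hom (hdec : EveryObjectDecomposes C)
    (H : ∀ Z : C, Indec C Z → HasPath C (Z⟦(1 : ℤ)⟧) Z)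
    {Q P : C} (hQ : Indec C Q) (hP : Indec C P) (g : Q ⟶ P) (hg : g ≠ 0) :
    HasPath C P Q := by
  obtain ⟨E, u, v, hT⟩ := Pretriangulated.distinguished_cocone_triangle g
  by_cases hu : u = 0
  · -- `g` is a split epimorphism, giving a nonzero map `P ⟶ Q`.
    obtain ⟨s, hs⟩ : ∃ s : P ⟶ Q, 𝟙 P = s ≫ g :=
      Triangle.coyoneda_exact₂ _ hT (𝟙 P) (by change 𝟙 P ≫ u = 0; rw [hu, comp_zero])
    have hs0 : s ≠ 0 := by
      intro h0
      exact id_ne_zero hP (by rw [hs, h0, zero_comp])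
    exact hasPath_single ⟨hP, hQ, Or.inl ⟨s, hs0⟩⟩
  · obtain ⟨m, w, hw, ⟨cs⟩⟩ := hdec E
    have hcu : u ≫ cs.hom ≠ 0 := by
      intro h0
      apply hu
      have := congrArg (· ≫ cs.inv) h0
      simpa using this
    have hex : ∃ i, u ≫ cs.hom ≫ biproduct.π w i ≠ 0 := by
      by_contra hall
      push_neg at hall
      apply hcu
      apply biproduct.hom_ext
      intro j
      rw [zero_comp]
      simpa [Category.assoc] using hall j
    obtain ⟨i, hui⟩ := hex
    by_cases hvi : (biproduct.ι w i ≫ cs.inv) ≫ v = 0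
    · -- the component `u_i` is a split epimorphism, hence an isomorphism, so `g = 0`.
      exfalso
      obtain ⟨t, ht⟩ : ∃ t : w i ⟶ P, biproduct.ι w i ≫ cs.inv = t ≫ u :=
        Triangle.coyoneda_exact₃ _ hT (biproduct.ι w i ≫ cs.inv) hvi
      set ui : P ⟶ w i := u ≫ cs.hom ≫ biproduct.π w i with hui_def
      have ht' : biproduct.ι w i ≫ cs.inv = t ≫ u := ht
      have htui : t ≫ ui = 𝟙 (w i) := by
        have heq : t ≫ ui = ((t ≫ u) ≫ cs.hom) ≫ biproduct.π w i := by
          simp [hui_def, Category.assoc]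
        rw [heq, ← ht']
        simp [biproduct.ι_π_self]
      obtain ⟨D, a, b, hT2⟩ := Pretriangulated.distinguished_cocone_triangle ui
      have ha : a = 0 := by
        have h1 : ui ≫ a = 0 := comp_distTriang_mor_zero₁₂ _ hT2
        calc a = (t ≫ ui) ≫ a := by rw [htui, Category.id_comp]
        _ = t ≫ (ui ≫ a) := by rw [Category.assoc]
        _ = 0 := by rw [h1, comp_zero]
      have hT3 := rot_of_distTriang _ (rot_of_distTriang _ hT2)
      obtain ⟨e, he1, he2⟩ := exists_iso_binaryBiproduct_of_distTriang _ hT3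
        (by
          simp only [Triangle.rotate_mor₃, Triangle.rotate_mor₁, Triangle.mk_mor₂, ha]
          exact neg_eq_zero.2 ((shiftFunctor C (1 : ℤ)).map_zero _ _))
      have hPi : Indec C (P⟦(1 : ℤ)⟧) := indec_shift hP 1
      rcases hPi.2 _ _ e with hD | hwi
      · haveI hiso : IsIso ui := (Triangle.isZero₃_iff_isIso₁ _ hT2).1 hD
        have hgu : g ≫ u = 0 := comp_distTriang_mor_zero₁₂ _ hT
        have hgui : g ≫ ui = 0 := by
          rw [hui_def, ← Category.assoc, hgu, zero_comp]
        simp only [CategoryTheory.Preadditive.IsIso.comp_right_eq_zero] at hgui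
        exact hg hgui
      · exact (indec_shift (hw i) 1).1 hwi
    · -- path `P ⟶ C_i ⟶ Q⟦1⟧ ⇝ Q`.
      have h1 : HasPath C P (w i) :=
        hasPath_single ⟨hP, hw i, Or.inl ⟨_, hui⟩⟩
      have h2 : HasPath C (w i) (Q⟦(1 : ℤ)⟧) :=
        hasPath_single ⟨hw i, indec_shift hQ 1, Or.inl ⟨_, hvi⟩⟩
      exact hasPath_trans (hasPath_trans h1 h2) (H Q hQ)

end Auxiliary

/-- in a block, if there are indecomposables `X`, `Y` with no path from `Y` to
`X`, then there is an indecomposable `Z` with no path from `Z⟦1⟧` to `Z`. -/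
theorem stmt_18 (hblock : IsBlock C) (X Y : C) (hX : Indec C X) (hY : Indec C Y)
    (h : ¬ HasPath C Y X) :
    ∃ Z : C, Indec C Z ∧ ¬ HasPath C (Z⟦(1 : ℤ)⟧) Z := by
  by_contra hcon
  push_neg at hcon
  apply h
  obtain ⟨-, hdec, hconn⟩ := hblock
  obtain ⟨n, f, h0, hl, hind, hstep⟩ := hconn Y X hY hX
  subst h0; subst hl
  have key : ∀ k (hk : k ≤ n), HasPath C (f 0) (f ⟨k, Nat.lt_succ_of_le hk⟩) := by
    intro k
    induction k with
    | zero =>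
      intro hk
      have h00 : (⟨0, Nat.lt_succ_of_le hk⟩ : Fin (n + 1)) = 0 := by ext; simp
      rw [h00]
      exact hasPath_refl (hind 0)
    | succ k ih =>
      intro hk
      have hk' : k ≤ n := Nat.le_of_succ_le hk
      have hkn : k < n := hk
      refine hasPath_trans (ih hk') ?_
      have hstep' := hstep ⟨k, hkn⟩
      rcases hstep' with ⟨g, hg⟩ | ⟨g, hg⟩ | ⟨s, ⟨e⟩⟩
      · exact hasPath_single ⟨hind (⟨k, hkn⟩ : Fin n).castSucc,
          hind (⟨k, hkn⟩ : Fin n).succ, Or.inl ⟨g, hg⟩⟩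
      · exact reverse_hom hdec hcon (hind (⟨k, hkn⟩ : Fin n).succ)
          (hind (⟨k, hkn⟩ : Fin n).castSucc) g hg
      · refine hasPath_trans (hasPath_shift hcon (hind (⟨k, hkn⟩ : Fin n).castSucc) s) ?_
        exact hasPath_of_iso (indec_shift (hind (⟨k, hkn⟩ : Fin n).castSucc) s)
          (hind (⟨k, hkn⟩ : Fin n).succ) e.symm
  exact key n le_rfl
end
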